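/- Define, for r ≤ -1 and parameters τ₁, τ₂, η₂, the coefficients c_{k,l}(τ₂,τ₁,η₂) by requiring ∑_{l=1}^{k} c_{k,l}(τ₂,τ₁,η₂) · ([(v+2)(η₂/2+τ₁v)²/v]^l)[v^r] = ([(v+2)(η₂/2+τ₂v)²/v]^k)[v^r] for all integers r ≤ -1, where p(v)[v^r] denotes the coefficient of v^r. Then for k = 2 one has c_{2,2} = 1 and c_{2,1} = 4η₂(τ₂ - τ₁). -/

import Mathlib

/-- `g_{η,τ}(v) = (v+2)(η/2+τv)²`, so that `f_{η,τ}(v) = g_{η,τ}(v)/v` is the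
Laurent polynomial `(v+2)(η/2+τv)²/v` of the paper. -/
noncomputable def gPoly (η τ : ℝ) : Polynomial ℝ :=
  (Polynomial.X + Polynomial.C 2) * (Polynomial.C (η / 2) + Polynomial.C τ * Polynomial.X) ^ 2

/-- `laurentCoeff η τ l r` is the coefficient of `v^r` in the Laurent polynomial
`f_{η,τ}(v)^l = ((v+2)(η/2+τv)²/v)^l = g_{η,τ}(v)^l / v^l`. -/
noncomputable def laurentCoeff (η τ : ℝ) (l : ℕ) (r : ℤ) : ℝ :=
  if h : 0 ≤ r + l then ((gPoly η τ) ^ l).coeff (r + l).toNat else 0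

/-!
Only the two most singular coefficients of `f^l`, at `v^{-l}` and `v^{1-l}`, enter for `k = 2`.
They are `g(0)^l` and `l g'(0) g(0)^{l-1}` with `g(0) = η²/2` and `g'(0) = η²/4 + 2ητ`.
Comparing the coefficients of `v^{-2}` gives `c₂ = 1`, since `f^1` has no pole of order 2;
comparing those of `v^{-1}` then gives `c₁ · η²/2 = 2η³(τ₂ - τ₁)`.
-/

open Polynomial

theorem Polynomial.coeff_one_pow {R : Type*} [CommSemiring R] (p : R[X]) (n : ℕ) :
    (p ^ n).coeff 1 = n * p.coeff 1 * p.coeff 0 ^ (n - 1) := by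
  rw [← coeff_coe, coe_pow, PowerSeries.coeff_one_pow, coeff_coe,
    ← PowerSeries.coeff_zero_eq_constantCoeff_apply, coeff_coe]

section

variable (η τ : ℝ)

theorem gPoly_coeff_zero : (gPoly η τ).coeff 0 = η ^ 2 / 2 := by
  rw [coeff_zero_eq_eval_zero]
  simp only [gPoly, eval_mul, eval_add, eval_pow, eval_X, eval_C]
  ring

theorem gPoly_coeff_one : (gPoly η τ).coeff 1 = η ^ 2 / 4 + 2 * η * τ := by
  have hderiv := coeff_derivative (gPoly η τ) 0
  rw [Nat.cast_zero, zero_add, zero_add, mul_one, coeff_zero_eq_eval_zero] at hderiv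
  rw [← hderiv]
  simp only [gPoly, derivative_mul, derivative_add, derivative_X, derivative_C, derivative_pow,
    eval_add, eval_mul, eval_pow, eval_C, eval_X, Nat.cast_ofNat, Nat.add_one_sub_one, pow_one,
    add_zero, zero_add, one_mul, zero_mul, mul_one, mul_zero]
  ring

variable {η τ} {l : ℕ} {r : ℤ}

theorem laurentCoeff_of_add_eq_zero (hr : r + l = 0) :
    laurentCoeff η τ l r = (η ^ 2 / 2) ^ l := by
  simp [laurentCoeff, hr, coeff_zero_eq_eval_zero, eval_pow, ← gPoly_coeff_zero η τ]

theorem laurentCoeff_of_add_eq_one (hr : r + l = 1) :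
    laurentCoeff η τ l r = l * (η ^ 2 / 4 + 2 * η * τ) * (η ^ 2 / 2) ^ (l - 1) := by
  simp [laurentCoeff, hr, coeff_one_pow, gPoly_coeff_zero, gPoly_coeff_one]

theorem laurentCoeff_of_add_neg (hr : r + l < 0) : laurentCoeff η τ l r = 0 := by
  simp [laurentCoeff, hr.not_ge]

end

/-- the coefficients `c_{k,l}(τ₂,τ₁,η₂)` are defined by requiring
`∑_{l=1}^{k} c_{k,l} · (f_{η₂,τ₁}(v)^l)[v^r] = (f_{η₂,τ₂}(v)^k)[v^r]` for all
integers `r ≤ -1`.  For `k = 2` one has `c_{2,2} = 1` and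
`c_{2,1} = 4η₂(τ₂ - τ₁)`. -/
theorem statement11 (η₂ τ₁ τ₂ : ℝ) (hη : 0 < η₂) (c : ℕ → ℝ)
    (hc : ∀ r : ℤ, r ≤ -1 →
      ∑ l ∈ Finset.Icc 1 2, c l * laurentCoeff η₂ τ₁ l r = laurentCoeff η₂ τ₂ 2 r) :
    c 2 = 1 ∧ c 1 = 4 * η₂ * (τ₂ - τ₁) := by
  have hsum (r : ℤ) (hr : r ≤ -1) :
      c 1 * laurentCoeff η₂ τ₁ 1 r + c 2 * laurentCoeff η₂ τ₁ 2 r = laurentCoeff η₂ τ₂ 2 r := by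
    simpa [Finset.sum_Icc_succ_top] using hc r hr
  have hv₂ := hsum (-2) (by norm_num)
  have hv₁ := hsum (-1) (by norm_num)
  rw [laurentCoeff_of_add_neg (by norm_num), laurentCoeff_of_add_eq_zero (by norm_num),
    laurentCoeff_of_add_eq_zero (by norm_num)] at hv₂
  rw [laurentCoeff_of_add_eq_zero (by norm_num), laurentCoeff_of_add_eq_one (by norm_num),
    laurentCoeff_of_add_eq_one (by norm_num)] at hv₁
  have hg₀ : η₂ ^ 2 / 2 ≠ 0 := by positivity
  have hc₂ : c 2 = 1 :=
    mul_right_cancel₀ (pow_ne_zero 2 hg₀) (by linear_combination hv₂)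
  refine ⟨hc₂, mul_right_cancel₀ hg₀ ?_⟩
  rw [hc₂] at hv₁
  linear_combination hv₁
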